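/- arXiv:2305.04178 — 2 statements merged into one kernel-verified Lean document; each statement's English description precedes it below -/
import Mathlib

section
/- Let μ = (μ₁,…,μ_s) be a partition with s ≥ 2 and μ_{s-1} > μ_s. Let μ⁺ be μ with its last part increased by 1 (still a partition). Then f(μ⁺) − f(μ) = (2μ_s + 1) f(μ⁺ − 1̂) − 2μ_s f(μ − 1̂), where ν − 1̂ subtracts 1 from every part of ν (deleting zeros). -/
/-- The odd double factorial `(2k-1)!! = 1 * 3 * ... * (2k-1)`, with `odf 0 = 1`. -/
def odf (k : Nat) : Int := ∏ j ∈ Finset.Icc 1 k, (2 * (j : Int) - 1)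

/-- Subtract `k` from every part, deleting parts that become zero. -/
def subHat (k : Nat) (l : List Nat) : List Nat :=
  (l.map (fun x => x - k)).filter (fun x => x ≠ 0)

/-- `l` is a partition: a non-increasing list of positive integers. -/
def IsPartition (l : List Nat) : Prop := l.Chain' (· ≥ ·) ∧ ∀ x ∈ l, 0 < x

/-- Increase the `i`-th part (1-based indexing). -/
def upAt (i : Nat) (l : List Nat) : List Nat := l.set (i - 1) (l.getD (i - 1) 0 + 1)

/-- Decrease the `j`-th part (1-based indexing), deleting it if it becomes zero. -/
def downAt (j : Nat) (l : List Nat) : List Nat :=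
  (l.set (j - 1) (l.getD (j - 1) 0 - 1)).filter (fun x => x ≠ 0)

/-!
Write `μ = L ++ [m]` and `g k = f (L - k̂)`. The recurrence expresses all four values in the
statement through one binomial transform `S g m = ∑_{k ≤ m} C(m, k) (2k-1)!! g k`: the two left
values are `S g (m+1)` and `S g m`, and, since every part of `L` exceeds `m`, the two right values
are `S (g ∘ succ) m` and `S (g ∘ succ) (m-1)`. The claim becomes an identity between binomial
transforms that follows from Pascal's rule, `(2k+1)!! = (2k+1) (2k-1)!!` and
`m C(m-1, k) = (m-k) C(m, k)`.
-/

open Finset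

lemma odf_succ (k : ℕ) : odf (k + 1) = odf k * (2 * k + 1) := by
  unfold odf
  rw [prod_Icc_succ_top (by omega)]
  push_cast
  ring

def odfBinomSum (g : ℕ → ℤ) (m : ℕ) : ℤ :=
  ∑ k ∈ range (m + 1), (m.choose k : ℤ) * odf k * g k

lemma odfBinomSum_eq_add_sum_Icc (g : ℕ → ℤ) (m : ℕ) :
    odfBinomSum g m = g 0 + ∑ k ∈ Icc 1 m, (m.choose k : ℤ) * odf k * g k := by
  rw [odfBinomSum, range_eq_Ico, sum_eq_sum_Ico_succ_bot (by omega), Ico_add_one_right_eq_Icc]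
  simp [odf]

lemma odfBinomSum_zero (g : ℕ → ℤ) : odfBinomSum g 0 = g 0 := by
  simp [odfBinomSum, odf]

lemma odfBinomSum_succ_sub (g : ℕ → ℤ) (m : ℕ) :
    odfBinomSum g (m + 1) - odfBinomSum g m
      = ∑ k ∈ range (m + 1), (m.choose k : ℤ) * odf (k + 1) * g (k + 1) := by
  have pascal : odfBinomSum g (m + 1)
      = ∑ k ∈ range (m + 1), (m.choose k : ℤ) * odf (k + 1) * g (k + 1)
        + (∑ k ∈ range (m + 1), (m.choose (k + 1) : ℤ) * odf (k + 1) * g (k + 1) + g 0) := by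
    simp only [odfBinomSum, sum_range_succ' _ (m + 1), Nat.choose_succ_succ', Nat.cast_add,
      add_mul, sum_add_distrib]
    simp [odf, add_assoc]
  have shift : odfBinomSum g m
      = ∑ k ∈ range (m + 1), (m.choose (k + 1) : ℤ) * odf (k + 1) * g (k + 1) + g 0 := by
    rw [odfBinomSum, sum_range_succ', sum_range_succ, Nat.choose_succ_self]
    simp [odf]
  rw [pascal, shift, add_sub_cancel_right]

lemma odfBinomSum_succ_sub_eq (g : ℕ → ℤ) (m : ℕ) :
    odfBinomSum g (m + 1) - odfBinomSum g m
      = (2 * m + 1) * odfBinomSum (fun k => g (k + 1)) m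
        - 2 * m * odfBinomSum (fun k => g (k + 1)) (m - 1) := by
  rw [odfBinomSum_succ_sub]
  rcases m with _ | n
  · simp [odfBinomSum, odf]
  have hterm : ∀ k ∈ range (n + 2), ((n + 1).choose k : ℤ) * odf (k + 1) * g (k + 1)
      = (2 * (n + 1 : ℕ) + 1) * (((n + 1).choose k : ℤ) * odf k * g (k + 1))
        - 2 * (n + 1 : ℕ) * ((n.choose k : ℤ) * odf k * g (k + 1)) := by
    intro k hk
    have hk : k ≤ n + 1 := Nat.lt_succ_iff.mp (mem_range.mp hk)
    have h := congrArg (Nat.cast (R := ℤ)) (Nat.choose_mul_succ_eq n k)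
    push_cast [Nat.cast_sub hk] at h
    rw [odf_succ]
    push_cast
    linear_combination (2 * odf k * g (k + 1)) * h
  have htail : ∑ k ∈ range (n + 2), (n.choose k : ℤ) * odf k * g (k + 1)
      = odfBinomSum (fun k => g (k + 1)) n := by
    rw [sum_range_succ, Nat.choose_succ_self, Nat.cast_zero, zero_mul, zero_mul, add_zero]
    rfl
  rw [sum_congr rfl hterm, sum_sub_distrib, ← mul_sum, ← mul_sum, htail, Nat.add_sub_cancel]
  rfl

lemma isPartition_iff_pairwise {l : List ℕ} :
    IsPartition l ↔ l.Pairwise (· ≥ ·) ∧ ∀ x ∈ l, 0 < x :=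
  and_congr_left' List.isChain_iff_pairwise

lemma isPartition_append_singleton {l : List ℕ} {m : ℕ} :
    IsPartition (l ++ [m]) ↔ IsPartition l ∧ 0 < m ∧ ∀ x ∈ l, m ≤ x := by
  simp only [isPartition_iff_pairwise, List.pairwise_append, List.mem_append, List.mem_singleton,
    List.pairwise_singleton, or_imp, forall_and, forall_eq, true_and, ge_iff_le]
  tauto

lemma subHat_subHat (j k : ℕ) (l : List ℕ) : subHat j (subHat k l) = subHat (k + j) l := by
  induction l with
  | nil => rfl
  | cons x l ih =>
    simp only [subHat, List.map_cons] at ih ⊢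
    by_cases hx : x - k = 0
    · have hxj : x - (k + j) = 0 := by omega
      simp_all
    · simp_all [Nat.sub_sub, List.filter_cons]

lemma subHat_zero {l : List ℕ} (hl : ∀ x ∈ l, 0 < x) : subHat 0 l = l := by
  simpa [subHat, List.filter_eq_self] using fun x hx => (hl x hx).ne'

lemma sub_mem_subHat {k x : ℕ} {l : List ℕ} (hx : x ∈ l) (hk : k < x) :
    x - k ∈ subHat k l := by
  simp only [subHat, List.mem_filter, List.mem_map]
  exact ⟨⟨x, hx, rfl⟩, by simp; omega⟩

lemma IsPartition.subHat {l : List ℕ} (hl : IsPartition l) (k : ℕ) :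
    IsPartition (subHat k l) := by
  rw [isPartition_iff_pairwise] at hl ⊢
  have hmono : ∀ a b : ℕ, a ≥ b → a - k ≥ b - k := fun _ _ h => Nat.sub_le_sub_right h k
  refine ⟨(hl.1.map (· - k) hmono).filter _, ?_⟩
  simp [_root_.subHat, Nat.pos_iff_ne_zero]

lemma upAt_length_append_singleton (l : List ℕ) (m : ℕ) :
    upAt (l ++ [m]).length (l ++ [m]) = l ++ [m + 1] := by
  simp [upAt]

def LastPartRecurrence (f : List ℕ → ℤ) : Prop :=
  ∀ l : List ℕ, IsPartition l → 2 ≤ l.length →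
    f l = f l.dropLast + ∑ k ∈ Icc 1 (l.getLastD 0),
      ((l.getLastD 0).choose k : ℤ) * odf k * f (subHat k l.dropLast)

namespace LastPartRecurrence

variable {f : List ℕ → ℤ} {l : List ℕ} {m : ℕ}

lemma eq_odfBinomSum (hf : LastPartRecurrence f) (hl : l ≠ []) (hp : IsPartition (l ++ [m])) :
    f (l ++ [m]) = odfBinomSum (fun k => f (subHat k l)) m := by
  have hpos : ∀ x ∈ l, 0 < x := (isPartition_append_singleton.mp hp).1.2
  rw [hf _ hp (by simpa [Nat.one_le_iff_ne_zero] using hl), odfBinomSum_eq_add_sum_Icc,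
    subHat_zero hpos]
  simp

lemma subHat_one_eq_odfBinomSum (hf : LastPartRecurrence f) (hl : l ≠ [])
    (hp : IsPartition (l ++ [m])) :
    f (subHat 1 (l ++ [m])) = odfBinomSum (fun k => f (subHat (k + 1) l)) (m - 1) := by
  obtain ⟨-, hm, hml⟩ := isPartition_append_singleton.mp hp
  obtain _ | _ | n := m
  · omega
  · simp [odfBinomSum_zero, subHat]
  · have hsub : subHat 1 (l ++ [n + 2]) = subHat 1 l ++ [n + 1] := by
      simp [subHat]
    obtain ⟨x, hx⟩ := List.exists_mem_of_ne_nil l hl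
    have hne : subHat 1 l ≠ [] := List.ne_nil_of_mem (sub_mem_subHat hx ((by omega : 1 < n + 2).trans_le (hml x hx)))
    rw [hsub, hf.eq_odfBinomSum hne (hsub ▸ hp.subHat 1)]
    simp [subHat_subHat, add_comm]

end LastPartRecurrence

theorem stmt4_general
    (f : List Nat → Int)
    (hfr : ∀ l : List Nat, IsPartition l → 2 ≤ l.length →
      f l = f l.dropLast + ∑ k ∈ Finset.Icc 1 (l.getLastD 0),
        ((l.getLastD 0).choose k : Int) * odf k * f (subHat k l.dropLast))
    (μ : List Nat) (hμ : IsPartition μ) (hs : 2 ≤ μ.length)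
    (hlt : μ.getD (μ.length - 1) 0 < μ.getD (μ.length - 2) 0) :
    f (upAt μ.length μ) - f μ
      = (2 * (μ.getLastD 0 : Int) + 1) * f (subHat 1 (upAt μ.length μ))
        - 2 * (μ.getLastD 0 : Int) * f (subHat 1 μ) := by
  have hf : LastPartRecurrence f := hfr
  obtain ⟨l, a, m, rfl⟩ : ∃ l a m, μ = l ++ [a] ++ [m] := by
    rcases μ.eq_nil_or_concat with rfl | ⟨l', m, rfl⟩
    · simp at hs
    rcases l'.eq_nil_or_concat with rfl | ⟨l, a, rfl⟩
    · simp at hs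
    exact ⟨l, a, m, by simp⟩
  have hma : m < a := by simpa [List.getD_append_right] using hlt
  have hup : IsPartition (l ++ [a] ++ [m + 1]) := by
    obtain ⟨hla, -, -⟩ := isPartition_append_singleton.mp hμ
    obtain ⟨-, -, hal⟩ := isPartition_append_singleton.mp hla
    refine isPartition_append_singleton.mpr ⟨hla, m.succ_pos, ?_⟩
    simp only [List.mem_append, List.mem_singleton]
    rintro x (hx | rfl)
    exacts [hma.trans_le (hal x hx), hma]
  have hne : l ++ [a] ≠ [] := by simp
  rw [upAt_length_append_singleton, hf.eq_odfBinomSum hne hup, hf.eq_odfBinomSum hne hμ,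
    hf.subHat_one_eq_odfBinomSum hne hup, hf.subHat_one_eq_odfBinomSum hne hμ, Nat.add_sub_cancel,
    List.getLastD_concat]
  exact odfBinomSum_succ_sub_eq _ m

theorem stmt4
    (d : Nat → Int) (hd0 : d 0 = 1) (hd1 : d 1 = 0)
    (hd : ∀ n : Nat, 2 ≤ n → d n = 2 * ((n : Int) - 1) * (d (n - 1) + d (n - 2)))
    (f : List Nat → Int) (hf0 : f [] = 1) (hf1 : ∀ m : Nat, f [m] = d m)
    (hfr : ∀ l : List Nat, IsPartition l → 2 ≤ l.length →
      f l = f l.dropLast + ∑ k ∈ Finset.Icc 1 (l.getLastD 0),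
        ((l.getLastD 0).choose k : Int) * odf k * f (subHat k l.dropLast))
    (μ : List Nat) (hμ : IsPartition μ) (hs : 2 ≤ μ.length)
    (hlt : μ.getD (μ.length - 1) 0 < μ.getD (μ.length - 2) 0) :
    f (upAt μ.length μ) - f μ
      = (2 * (μ.getLastD 0 : Int) + 1) * f (subHat 1 (upAt μ.length μ))
        - 2 * (μ.getLastD 0 : Int) * f (subHat 1 μ) :=
  stmt4_general f hfr μ hμ hs hlt
end

section
/- For every n ≥ 3 and every partition μ of n with first part 3 and all remaining parts at most 2, f(μ) = 2n + 2. -/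
/-!
Peeling off the last part reduces every partition `3 2^a 1^b` to shorter ones of the same shape
or to the hooks `2 1^c`. Removing a trailing `1` from `2 1^c` adds `f [1] = 0`, so
`f (2 1^c) = f [2] = 2`; removing a trailing `2` from `3 2^a` adds `2 f (2 1^a) + 3 f [1] = 4`, and
removing a trailing `1` from `3 2^a 1^b` adds `f (2 1^a) = 2`. Hence
`f (3 2^a 1^b) = f [3] + 4a + 2b = 8 + 4a + 2b = 2n + 2` for `n = 3 + 2a + b`.
-/

open List

def LastPartRecursion (f : List ℕ → ℤ) : Prop :=
  ∀ l : List ℕ, IsPartition l → 2 ≤ l.length →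
    f l = f l.dropLast + ∑ k ∈ Finset.Icc 1 (l.getLastD 0),
      ((l.getLastD 0).choose k : ℤ) * odf k * f (subHat k l.dropLast)

theorem odf_one : odf 1 = 1 := by decide

theorem odf_two : odf 2 = 3 := by decide

section SubHat

variable {k m : ℕ}

theorem subHat_append (l₁ l₂ : List ℕ) : subHat k (l₁ ++ l₂) = subHat k l₁ ++ subHat k l₂ := by
  simp [subHat, filter_append]

theorem subHat_cons_of_lt (h : k < m) (l : List ℕ) : subHat k (m :: l) = (m - k) :: subHat k l := by
  simp [subHat, Nat.sub_ne_zero_of_lt h]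

theorem subHat_replicate_of_lt (h : k < m) (a : ℕ) : subHat k (replicate a m) = replicate a (m - k) := by
  simp [subHat, map_replicate, Nat.sub_ne_zero_of_lt h]

theorem subHat_replicate_of_le (h : m ≤ k) (a : ℕ) : subHat k (replicate a m) = [] := by
  simp [subHat, map_replicate, Nat.sub_eq_zero_of_le h]

end SubHat

theorem isPartition_cons_replicate_append_replicate {x p q : ℕ} (hpx : p ≤ x) (hqp : q ≤ p)
    (hq : 0 < q) (a b : ℕ) : IsPartition (x :: replicate a p ++ replicate b q) := by
  constructor
  · rw [List.Chain', isChain_iff_pairwise, cons_append, pairwise_cons, pairwise_append]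
    refine ⟨fun y hy => ?_, pairwise_replicate.2 (Or.inr le_rfl),
      pairwise_replicate.2 (Or.inr le_rfl), fun y hy z hz => ?_⟩
    · simp only [mem_append, mem_replicate] at hy
      omega
    · rw [eq_of_mem_replicate hy, eq_of_mem_replicate hz]
      exact hqp
  · intro y hy
    simp only [cons_append, mem_cons, mem_append, mem_replicate] at hy
    omega

theorem exists_eq_replicate_append_replicate {p q : ℕ} (hqp : q < p) {t : List ℕ}
    (ht : t.IsChain (· ≥ ·)) (hpq : ∀ x ∈ t, x = p ∨ x = q) :
    ∃ a b, t = replicate a p ++ replicate b q := by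
  induction t with
  | nil => exact ⟨0, 0, rfl⟩
  | cons x t ih =>
    rw [isChain_cons] at ht
    obtain ⟨a, b, rfl⟩ := ih ht.2 fun y hy => hpq y (mem_cons_of_mem _ hy)
    rcases hpq x mem_cons_self with rfl | rfl
    · exact ⟨a + 1, b, rfl⟩
    · cases a with
      | zero => exact ⟨0, b + 1, rfl⟩
      | succ a => exact absurd (ht.1 p (by simp [replicate_succ])) (Nat.not_le.2 hqp)

theorem eq_three_cons_replicate_append_replicate {μ : List ℕ} (hμ : IsPartition μ)
    (hhead : μ.headD 0 = 3) (htail : ∀ x ∈ μ.tail, x ≤ 2) :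
    ∃ a b, μ = 3 :: replicate a 2 ++ replicate b 1 := by
  obtain _ | ⟨x, t⟩ := μ
  · simp at hhead
  obtain rfl : x = 3 := hhead
  obtain ⟨a, b, rfl⟩ := exists_eq_replicate_append_replicate one_lt_two hμ.1.tail fun y hy => by
    have := hμ.2 y (mem_cons_of_mem _ hy)
    have := htail y hy
    omega
  exact ⟨a, b, rfl⟩

namespace LastPartRecursion

variable {f : List ℕ → ℤ}

theorem append_singleton (hf : LastPartRecursion f) {l : List ℕ} (hl : l ≠ []) {m : ℕ}
    (hlm : IsPartition (l ++ [m])) :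
    f (l ++ [m]) = f l + ∑ k ∈ Finset.Icc 1 m, (m.choose k : ℤ) * odf k * f (subHat k l) := by
  have hlen : 2 ≤ (l ++ [m]).length := by
    simpa [Nat.one_le_iff_ne_zero] using hl
  rw [hf _ hlm hlen, dropLast_concat, getLastD_concat]

theorem append_one (hf : LastPartRecursion f) {l : List ℕ} (hl : l ≠ [])
    (hl1 : IsPartition (l ++ [1])) : f (l ++ [1]) = f l + f (subHat 1 l) := by
  rw [hf.append_singleton hl hl1, Finset.Icc_self, Finset.sum_singleton, odf_one, Nat.choose_self]
  ring

theorem append_two (hf : LastPartRecursion f) {l : List ℕ} (hl : l ≠ [])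
    (hl2 : IsPartition (l ++ [2])) :
    f (l ++ [2]) = f l + 2 * f (subHat 1 l) + 3 * f (subHat 2 l) := by
  rw [hf.append_singleton hl hl2, show Finset.Icc 1 2 = {1, 2} from rfl,
    Finset.sum_pair (by norm_num), odf_one, odf_two, Nat.choose_one_right, Nat.choose_self]
  push_cast
  ring

theorem two_cons_replicate_one (hf : LastPartRecursion f) (h1 : f [1] = 0) (h2 : f [2] = 2)
    (c : ℕ) : f (2 :: replicate c 1) = 2 := by
  induction c with
  | zero => exact h2
  | succ c ih =>
    have hp : IsPartition (2 :: replicate c 1 ++ [1]) := by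
      simpa [replicate_succ'] using
        isPartition_cons_replicate_append_replicate one_le_two le_rfl one_pos 0 (c + 1)
    rw [replicate_succ', ← cons_append, hf.append_one (cons_ne_nil _ _) hp, ih]
    norm_num [subHat_cons_of_lt, subHat_replicate_of_le, h1]

theorem three_cons_replicate_two (hf : LastPartRecursion f) (h1 : f [1] = 0) (h2 : f [2] = 2)
    (h3 : f [3] = 8) (a : ℕ) : f (3 :: replicate a 2) = 8 + 4 * a := by
  induction a with
  | zero => simpa using h3
  | succ a ih =>
    have hp : IsPartition (3 :: replicate a 2 ++ [2]) := by
      simpa [replicate_succ'] using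
        isPartition_cons_replicate_append_replicate (x := 3) (p := 2) (by norm_num) le_rfl two_pos
          (a + 1) 0
    rw [replicate_succ', ← cons_append, hf.append_two (cons_ne_nil _ _) hp, ih]
    norm_num [subHat_cons_of_lt, subHat_replicate_of_lt, subHat_replicate_of_le,
      hf.two_cons_replicate_one h1 h2, h1]
    ring

theorem three_cons_replicate_two_append_replicate_one (hf : LastPartRecursion f)
    (h1 : f [1] = 0) (h2 : f [2] = 2) (h3 : f [3] = 8) (a b : ℕ) :
    f (3 :: replicate a 2 ++ replicate b 1) = 8 + 4 * a + 2 * b := by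
  induction b with
  | zero => simpa using hf.three_cons_replicate_two h1 h2 h3 a
  | succ b ih =>
    have hp := isPartition_cons_replicate_append_replicate (x := 3) (by norm_num) one_le_two
      one_pos a (b + 1)
    rw [replicate_succ', ← append_assoc] at hp ⊢
    rw [hf.append_one (by simp) hp, ih]
    norm_num [subHat_append, subHat_cons_of_lt, subHat_replicate_of_lt, subHat_replicate_of_le,
      hf.two_cons_replicate_one h1 h2]
    ring

end LastPartRecursion

theorem stmt12_general
    (d : Nat → Int) (hd0 : d 0 = 1) (hd1 : d 1 = 0)
    (hd : ∀ n : Nat, 2 ≤ n → d n = 2 * ((n : Int) - 1) * (d (n - 1) + d (n - 2)))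
    (f : List Nat → Int) (hf1 : ∀ m : Nat, f [m] = d m)
    (hfr : ∀ l : List Nat, IsPartition l → 2 ≤ l.length →
      f l = f l.dropLast + ∑ k ∈ Finset.Icc 1 (l.getLastD 0),
        ((l.getLastD 0).choose k : Int) * odf k * f (subHat k l.dropLast))
    (n : Nat)
    (μ : List Nat) (hμ : IsPartition μ) (hsum : μ.sum = n)
    (hhead : μ.headD 0 = 3) (htail : ∀ x ∈ μ.tail, x ≤ 2) :
    f μ = 2 * (n : Int) + 2 := by
  have hd2 : d 2 = 2 := by rw [hd 2 le_rfl]; norm_num [hd0, hd1]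
  have hd3 : d 3 = 8 := by rw [hd 3 (by norm_num)]; norm_num [hd1, hd2]
  obtain ⟨a, b, rfl⟩ := eq_three_cons_replicate_append_replicate hμ hhead htail
  have hrec : LastPartRecursion f := hfr
  rw [hrec.three_cons_replicate_two_append_replicate_one (by rw [hf1, hd1]) (by rw [hf1, hd2])
    (by rw [hf1, hd3]), ← hsum]
  simp only [cons_append, sum_cons, sum_append, sum_replicate, smul_eq_mul]
  push_cast
  ring

theorem stmt12
    (d : Nat → Int) (hd0 : d 0 = 1) (hd1 : d 1 = 0)
    (hd : ∀ n : Nat, 2 ≤ n → d n = 2 * ((n : Int) - 1) * (d (n - 1) + d (n - 2)))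
    (f : List Nat → Int) (hf0 : f [] = 1) (hf1 : ∀ m : Nat, f [m] = d m)
    (hfr : ∀ l : List Nat, IsPartition l → 2 ≤ l.length →
      f l = f l.dropLast + ∑ k ∈ Finset.Icc 1 (l.getLastD 0),
        ((l.getLastD 0).choose k : Int) * odf k * f (subHat k l.dropLast))
    (n : Nat) (hn : 3 ≤ n)
    (μ : List Nat) (hμ : IsPartition μ) (hsum : μ.sum = n)
    (hhead : μ.headD 0 = 3) (htail : ∀ x ∈ μ.tail, x ≤ 2) :
    f μ = 2 * (n : Int) + 2 :=
  stmt12_general d hd0 hd1 hd f hf1 hfr n μ hμ hsum hhead htail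
end
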